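/- arXiv:1307.4035 — 2 statements merged into one kernel-verified Lean document; each statement's English description precedes it below -/
import Mathlib

section
/- Fix odd d ≥ 3 and a slow-growth function f, and let r0 be minimal with ((d+1)/(d-1))·2d·∑_{r>r0} ((d-1)/(d+1))^r f(r) < 1. For any graph G with degrees odd and at most d and n_r(G,i) ≤ f(r) for all i, r: if A^j_0 = s for all j within distance r0+2 of a vertex i, then under synchronous majority dynamics A^i_t = s for all t ≥ 0. -/
/-!
Suppose `A T i ≠ s` and let `τ v` be the first time `v` dissents from `s`. A vertex dissenting
at a positive time has a strict majority of its neighbours dissenting strictly earlier, so the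
dissenters that can influence `i` by time `T` form a finite cascade towards `i`. Charge each edge
from an earlier dissenter to a later one `x` the weight `q ^ (dist i x + 1)`, where
`q = (d - 1) / (d + 1)`. The majority condition and `deg ≤ d` give `out ≤ q · in` at every
vertex with `τ > 0`, so such a vertex receives at least what it sends, and `i` receives at least
`q` more. Hence the initial dissenters, all at distance `> r0 + 2`, send at least `q`, which
forces `q ≤ d · ∑_{r > r0} f r · q ^ r`, contradicting the choice of `r0`.
-/

open Finset

namespace SimpleGraph

variable {V : Type*}

section Metric

variable {G : SimpleGraph V}

lemma dist_le_dist_add_one_of_adj {u v w : V} (h : G.Adj v w) :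
    G.dist u w ≤ G.dist u v + 1 := by
  have := h.diff_dist_adj (u := u)
  omega

lemma Reachable.mem_ball_of_dist_lt {c v : V} {n : ℕ} (h : G.Reachable c v)
    (hn : G.dist c v < n) : v ∈ G.ball c n := by
  rw [mem_ball, edist_comm, ← h.coe_dist_eq_edist]
  exact_mod_cast hn

variable (G) in
lemma finite_ball [G.LocallyFinite] (c : V) (n : ℕ) : (G.ball c n).Finite := by
  induction n with
  | zero => simp
  | succ n ih =>
    refine ((ih.biUnion fun u _ => (G.neighborSet u).toFinite).insert c).subset ?_
    intro v hv
    obtain ⟨p, hp⟩ := (reachable_of_edist_ne_top (ne_top_of_lt hv)).exists_walk_length_eq_edist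
    cases p with
    | nil => exact Set.mem_insert _ _
    | @cons _ w _ hvw p =>
      refine Set.mem_insert_of_mem _ (Set.mem_biUnion (x := w) ?_ hvw.symm)
      have hlen : p.length < n := by
        have := mem_ball.1 hv
        rw [← hp, Walk.length_cons] at this
        exact Nat.succ_lt_succ_iff.1 (by exact_mod_cast this)
      exact (edist_le p).trans_lt (by exact_mod_cast hlen)

variable (G) in
lemma finite_setOf_dist_eq [G.LocallyFinite] (c : V) {r : ℕ} (hr : r ≠ 0) :
    {v | G.dist c v = r}.Finite :=
  (G.finite_ball c (r + 1)).subset fun v (hv : G.dist c v = r) =>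
    (Reachable.of_dist_ne_zero (hv ▸ hr)).mem_ball_of_dist_lt (by omega)

end Metric

section MajorityDynamics

variable (G : SimpleGraph V) [G.LocallyFinite]

def IsMajorityDynamics (A : ℕ → V → ℤ) : Prop :=
  ∀ t v, A (t + 1) v = if 0 < ∑ j ∈ G.neighborFinset v, A t j then 1 else -1

variable {G} {A : ℕ → V → ℤ} {s : ℤ}

lemma IsMajorityDynamics.eq_one_or_eq_neg_one (hA : G.IsMajorityDynamics A)
    (h0 : ∀ v, A 0 v = 1 ∨ A 0 v = -1) : ∀ t v, A t v = 1 ∨ A t v = -1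
  | 0, v => h0 v
  | t + 1, v => by rw [hA]; split <;> simp

lemma IsMajorityDynamics.degree_lt_two_mul_card_ne (hA : G.IsMajorityDynamics A) {t : ℕ} {v : V}
    (hval : ∀ u, A t u = 1 ∨ A t u = -1) (hs : s = 1 ∨ s = -1) (hodd : Odd (G.degree v))
    (hflip : A (t + 1) v ≠ s) :
    G.degree v < 2 * #{u ∈ G.neighborFinset v | A t u ≠ s} := by
  classical
  have hsum : s * ∑ u ∈ G.neighborFinset v, A t u =
      #{u ∈ G.neighborFinset v | A t u = s} - #{u ∈ G.neighborFinset v | A t u ≠ s} := by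
    have hterm : ∀ u, s * A t u = if A t u = s then 1 else -1 := fun u => by
      rcases hval u with h | h <;> rcases hs with rfl | rfl <;> simp [h]
    simp only [mul_sum, hterm, sum_ite, sum_const, nsmul_eq_mul, mul_one, mul_neg]
    ring
  have hdisagree : s * ∑ u ∈ G.neighborFinset v, A t u ≤ 0 := by
    rw [hA] at hflip
    rcases hs with rfl | rfl <;> split_ifs at hflip <;> omega
  have hcard : #{u ∈ G.neighborFinset v | A t u = s} + #{u ∈ G.neighborFinset v | A t u ≠ s} =
      G.degree v := by
    rw [← card_neighborFinset_eq_degree]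
    exact card_filter_add_card_filter_not _
  obtain ⟨k, hk⟩ := hodd
  omega

end MajorityDynamics

section Cascade

open scoped Classical

variable {G : SimpleGraph V}

variable (G) in
noncomputable def earlierNeighbors (W : Finset V) (τ : V → ℕ) (x : V) : Finset V :=
  {u ∈ W | G.Adj x u ∧ τ u < τ x}

variable (G) in
noncomputable def laterNeighbors (W : Finset V) (τ : V → ℕ) (x : V) : Finset V :=
  {u ∈ W | G.Adj x u ∧ τ x < τ u}

variable {W : Finset V} {τ : V → ℕ}

variable (G W τ) in
lemma sum_sum_laterNeighbors (φ : V → ℝ) :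
    ∑ v ∈ W, ∑ x ∈ G.laterNeighbors W τ v, φ x = ∑ x ∈ W, #(G.earlierNeighbors W τ x) * φ x := by
  rw [sum_comm' (t' := W) (s' := G.earlierNeighbors W τ)]
  · simp only [sum_const, nsmul_eq_mul]
  · intro v x
    simp only [earlierNeighbors, laterNeighbors, mem_filter, G.adj_comm v x]
    tauto

lemma sum_laterNeighbors_pow_le {q : ℝ} (hq₀ : 0 ≤ q) (hq₁ : q ≤ 1) (i v : V) :
    ∑ x ∈ G.laterNeighbors W τ v, q ^ (G.dist i x + 1) ≤
      #(G.laterNeighbors W τ v) * q ^ G.dist i v := by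
  rw [← nsmul_eq_mul]
  refine sum_le_card_nsmul _ _ _ fun x hx => pow_le_pow_of_le_one hq₀ hq₁ ?_
  simp only [laterNeighbors, mem_filter] at hx
  exact dist_le_dist_add_one_of_adj hx.2.1.symm

lemma sum_laterNeighbors_self_pow (q : ℝ) (i : V) :
    ∑ x ∈ G.laterNeighbors W τ i, q ^ (G.dist i x + 1) = #(G.laterNeighbors W τ i) * q ^ 2 := by
  rw [← nsmul_eq_mul, ← sum_const]
  refine sum_congr rfl fun x hx => ?_
  simp only [laterNeighbors, mem_filter] at hx
  rw [dist_eq_one_iff_adj.2 hx.2.1]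

variable [G.LocallyFinite]

variable (G W τ) in
lemma card_earlierNeighbors_add_card_laterNeighbors_le (x : V) :
    #(G.earlierNeighbors W τ x) + #(G.laterNeighbors W τ x) ≤ G.degree x := by
  have hdisj : Disjoint (G.earlierNeighbors W τ x) (G.laterNeighbors W τ x) :=
    Finset.disjoint_left.2 fun u hu hu' => by
      simp only [earlierNeighbors, laterNeighbors, mem_filter] at hu hu'
      omega
  rw [← card_union_of_disjoint hdisj, ← card_neighborFinset_eq_degree]
  refine card_le_card fun u hu => ?_
  simp only [mem_union, earlierNeighbors, laterNeighbors, mem_filter] at hu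
  rw [mem_neighborFinset]
  tauto

lemma card_laterNeighbors_lt {x : V} (hmaj : G.degree x < 2 * #(G.earlierNeighbors W τ x)) :
    #(G.laterNeighbors W τ x) < #(G.earlierNeighbors W τ x) := by
  have := card_earlierNeighbors_add_card_laterNeighbors_le G W τ x
  omega

lemma card_laterNeighbors_le_mul {x : V} {d : ℕ} {q : ℝ} (hqd : (d : ℝ) - 1 ≤ q * (d + 1))
    (hdeg : G.degree x ≤ d) (hmaj : G.degree x < 2 * #(G.earlierNeighbors W τ x)) :
    (#(G.laterNeighbors W τ x) : ℝ) ≤ q * #(G.earlierNeighbors W τ x) := by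
  have hsum := card_earlierNeighbors_add_card_laterNeighbors_le G W τ x
  set a := #(G.earlierNeighbors W τ x)
  set b := #(G.laterNeighbors W τ x)
  set k := G.degree x
  have hab : (a : ℝ) + b ≤ k := by exact_mod_cast hsum
  have hka : (k : ℝ) + 1 ≤ 2 * a := by exact_mod_cast hmaj
  have hkd : (k : ℝ) ≤ d := by exact_mod_cast hdeg
  have key : ((d : ℝ) + 1) * b ≤ ((d : ℝ) + 1) * (q * a) := by
    nlinarith [mul_nonneg (a.cast_nonneg : (0 : ℝ) ≤ a) (sub_nonneg.2 hqd),
      mul_nonneg (d.cast_nonneg : (0 : ℝ) ≤ d) (sub_nonneg.2 hka)]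
  exact le_of_mul_le_mul_left key (by positivity)

theorem le_mul_sum_pow_dist_of_cascade {i : V} {d : ℕ} {q : ℝ} (hq₀ : 0 ≤ q) (hq₁ : q ≤ 1)
    (hqd : (d : ℝ) - 1 ≤ q * (d + 1)) (hdeg : ∀ v, G.degree v ≤ d) (hi : i ∈ W) (hτi : 0 < τ i)
    (hmaj : ∀ x ∈ W, 0 < τ x → G.degree x < 2 * #(G.earlierNeighbors W τ x)) :
    q ≤ d * ∑ v ∈ W with τ v = 0, q ^ G.dist i v := by
  have hvertex : ∀ v ∈ W, ∑ x ∈ G.laterNeighbors W τ v, q ^ (G.dist i x + 1) ≤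
      #(G.earlierNeighbors W τ v) * q ^ (G.dist i v + 1) +
        ((if τ v = 0 then d * q ^ G.dist i v else 0) - if v = i then q else 0) := by
    intro v hv
    by_cases hvi : v = i
    · subst hvi
      have hlt : (#(G.laterNeighbors W τ v) : ℝ) + 1 ≤ #(G.earlierNeighbors W τ v) := by
        exact_mod_cast card_laterNeighbors_lt (hmaj v hv hτi)
      rw [sum_laterNeighbors_self_pow, if_neg hτi.ne', if_pos rfl, dist_self, zero_add, pow_one]
      calc _ ≤ ((#(G.earlierNeighbors W τ v) : ℝ) - 1) * q :=
            mul_le_mul (by linarith) (by nlinarith) (by positivity) (by linarith)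
        _ = _ := by ring
    rw [if_neg hvi, sub_zero]
    refine (sum_laterNeighbors_pow_le hq₀ hq₁ i v).trans ?_
    have hpow := pow_nonneg hq₀ (G.dist i v)
    rcases (τ v).eq_zero_or_pos with hτv | hτv
    · have hout : (#(G.laterNeighbors W τ v) : ℝ) ≤ d := by
        exact_mod_cast (Nat.le_add_left _ _).trans
          ((card_earlierNeighbors_add_card_laterNeighbors_le G W τ v).trans (hdeg v))
      rw [if_pos hτv]
      nlinarith [pow_nonneg hq₀ (G.dist i v + 1)]
    · rw [if_neg hτv.ne', add_zero]
      have hout := card_laterNeighbors_le_mul hqd (hdeg v) (hmaj v hv hτv)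
      calc _ ≤ q * #(G.earlierNeighbors W τ v) * q ^ G.dist i v :=
            mul_le_mul_of_nonneg_right hout hpow
        _ = _ := by ring
  have htotal := sum_le_sum hvertex
  rw [sum_add_distrib, sum_sub_distrib, sum_sum_laterNeighbors, ← sum_filter, sum_ite_eq',
    if_pos hi] at htotal
  rw [mul_sum]
  linarith

end Cascade

variable {G : SimpleGraph V} [G.LocallyFinite] {A : ℕ → V → ℤ} {s : ℤ}

theorem IsMajorityDynamics.exists_cascade (hA : G.IsMajorityDynamics A)
    (h0 : ∀ v, A 0 v = 1 ∨ A 0 v = -1) (hs : s = 1 ∨ s = -1) (hodd : ∀ v, Odd (G.degree v))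
    {i : V} {T : ℕ} (hi0 : A 0 i = s) (hiT : A T i ≠ s) :
    ∃ (W : Finset V) (τ : V → ℕ), i ∈ W ∧ 0 < τ i ∧ (∀ v ∈ W, τ v = 0 → A 0 v ≠ s) ∧
      ∀ x ∈ W, 0 < τ x → G.degree x < 2 * #(G.earlierNeighbors W τ x) := by
  classical
  set τ : V → ℕ := fun v => sInf {t | A t v ≠ s}
  have hτ_le {v : V} {t : ℕ} (h : A t v ≠ s) : τ v ≤ t := Nat.sInf_le h
  have hτ_ne {v : V} {t : ℕ} (h : A t v ≠ s) : A (τ v) v ≠ s :=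
    Nat.sInf_mem (s := {t | A t v ≠ s}) ⟨t, h⟩
  -- the vertices whose dissent can still reach `i` by time `T`
  set C : Set V := {v | G.Reachable i v ∧ ∃ t, t + G.dist i v ≤ T ∧ A t v ≠ s}
  have hC : C.Finite := by
    refine (G.finite_ball i (T + 1)).subset ?_
    rintro v ⟨hr, t, ht, -⟩
    exact hr.mem_ball_of_dist_lt (by omega)
  have hmem {v : V} : v ∈ hC.toFinset ↔ v ∈ C := hC.mem_toFinset
  refine ⟨hC.toFinset, τ, hmem.2 ⟨.refl i, T, by simp, hiT⟩,
    Nat.pos_of_ne_zero fun h => hτ_ne hiT (h ▸ hi0), fun v hv hτv => ?_, fun x hx hτx => ?_⟩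
  · obtain ⟨-, t, -, hbad⟩ := hmem.1 hv
    exact hτv ▸ hτ_ne hbad
  obtain ⟨hrx, t', ht', hbad⟩ := hmem.1 hx
  obtain ⟨t, ht⟩ : ∃ t, τ x = t + 1 := ⟨τ x - 1, by omega⟩
  have hflip := hA.degree_lt_two_mul_card_ne (hA.eq_one_or_eq_neg_one h0 t) hs (hodd x)
    (ht ▸ hτ_ne hbad)
  refine hflip.trans_le (Nat.mul_le_mul_left 2 (card_le_card fun u hu => ?_))
  rw [mem_filter, mem_neighborFinset] at hu
  have hτu := hτ_le hu.2
  have hdist := dist_le_dist_add_one_of_adj (u := i) hu.1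
  have hτx_le := hτ_le hbad
  simp only [earlierNeighbors, mem_filter]
  exact ⟨hmem.2 ⟨hrx.trans hu.1.reachable, t, by omega, hu.2⟩, hu.1, by omega⟩

lemma sum_pow_dist_le_tsum {f : ℕ → ℕ} {q : ℝ} (hq : 0 ≤ q)
    (hf : Summable fun r => q ^ r * (f r : ℝ)) {i : V}
    (hgrowth : ∀ r, {j | G.dist i j = r}.ncard ≤ f r) {S : Finset V} {r₀ : ℕ}
    (hS : ∀ v ∈ S, r₀ < G.dist i v) :
    ∑ v ∈ S, q ^ G.dist i v ≤ ∑' r, if r₀ < r then q ^ r * (f r : ℝ) else 0 := by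
  classical
  have hnonneg (r : ℕ) : 0 ≤ if r₀ < r then q ^ r * (f r : ℝ) else 0 := by
    split <;> positivity
  have hsummable : Summable fun r => if r₀ < r then q ^ r * (f r : ℝ) else 0 :=
    hf.of_nonneg_of_le hnonneg fun r => by split; exacts [le_rfl, by positivity]
  rw [sum_comp (fun r => q ^ r) (G.dist i)]
  refine (sum_le_sum fun r hr => ?_).trans (hsummable.sum_le_tsum _ fun r _ => hnonneg r)
  obtain ⟨v, hv, rfl⟩ := mem_image.1 hr
  have hcard : #{u ∈ S | G.dist i u = G.dist i v} ≤ f (G.dist i v) := by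
    rw [← Set.ncard_coe_finset]
    refine (Set.ncard_le_ncard (fun u hu => ?_) ?_).trans (hgrowth _)
    · exact (mem_filter.1 hu).2
    · exact G.finite_setOf_dist_eq i (by have := hS v hv; omega)
  rw [if_pos (hS v hv), nsmul_eq_mul, mul_comm]
  gcongr

end SimpleGraph

/-- Fix odd `d ≥ 3`, a slow-growth function `f`, and let `r0` be minimal
with `((d+1)/(d-1))·2d·∑_{r>r0} ((d-1)/(d+1))^r f(r) < 1`. For any graph `G` with degrees
odd and at most `d` and `n_r(G,i) ≤ f(r)`: if all vertices within distance `r0+2` of `i`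
initially hold opinion `s`, then `A^i_t = s` for all `t ≥ 0` (synchronous majority
dynamics). -/
theorem stmt_16 (d : ℕ) (hd : 3 ≤ d) (hdodd : Odd d) (f : ℕ → ℕ)
    (hf : Summable (fun r : ℕ => (((d : ℝ) - 1) / ((d : ℝ) + 1)) ^ r * (f r : ℝ)))
    (r0 : ℕ)
    (hr0 : (((d : ℝ) + 1) / ((d : ℝ) - 1)) * (2 * d) *
      (∑' r : ℕ, if r0 < r then
        (((d : ℝ) - 1) / ((d : ℝ) + 1)) ^ r * (f r : ℝ) else 0) < 1)
    (hr0min : ∀ r0' : ℕ, r0' < r0 →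
      ¬ ((((d : ℝ) + 1) / ((d : ℝ) - 1)) * (2 * d) *
        (∑' r : ℕ, if r0' < r then
          (((d : ℝ) - 1) / ((d : ℝ) + 1)) ^ r * (f r : ℝ) else 0) < 1))
    {V : Type*} (G : SimpleGraph V) [∀ v : V, Fintype (G.neighborSet v)]
    (hconn : G.Connected)
    (hodd : ∀ v, Odd (G.degree v)) (hdeg : ∀ v, G.degree v ≤ d)
    (hgrowth : ∀ (i : V) (r : ℕ), {j | G.dist i j = r}.ncard ≤ f r)
    (A : ℕ → V → ℤ) (hAval : ∀ v, A 0 v = 1 ∨ A 0 v = -1)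
    (hdyn : ∀ t v, A (t + 1) v =
      if 0 < ∑ j ∈ G.neighborFinset v, A t j then 1 else -1)
    (i : V) (s : ℤ) (hs : s = 1 ∨ s = -1)
    (hball : ∀ j : V, G.dist i j ≤ r0 + 2 → A 0 j = s) :
    ∀ t : ℕ, A t i = s := by
  intro T
  by_contra hT
  set q : ℝ := ((d : ℝ) - 1) / ((d : ℝ) + 1) with hq
  set tail := ∑' r : ℕ, if r0 < r then q ^ r * (f r : ℝ) else 0
  have hd' : (3 : ℝ) ≤ d := by exact_mod_cast hd
  have hq₀ : 0 ≤ q := div_nonneg (by linarith) (by linarith)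
  have hq₁ : q ≤ 1 := (div_le_one (by linarith)).2 (by linarith)
  have hqd : (d : ℝ) - 1 ≤ q * (d + 1) := (div_mul_cancel₀ _ (by linarith)).ge
  obtain ⟨W, τ, hi, hτi, hsrc, hmaj⟩ :=
    SimpleGraph.IsMajorityDynamics.exists_cascade hdyn hAval hs hodd (hball i (by simp)) hT
  have hsources : q ≤ d * tail := by
    refine (G.le_mul_sum_pow_dist_of_cascade hq₀ hq₁ hqd hdeg hi hτi hmaj).trans ?_
    refine mul_le_mul_of_nonneg_left (SimpleGraph.sum_pow_dist_le_tsum hq₀ hf (hgrowth i)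
      fun v hv => ?_) d.cast_nonneg
    rw [mem_filter] at hv
    by_contra hfar
    exact hsrc v hv.1 hv.2 (hball v (by omega))
  have hinv : ((d : ℝ) + 1) / ((d : ℝ) - 1) * q = 1 := by
    have : (d : ℝ) - 1 ≠ 0 := by linarith
    rw [hq]; field_simp
  have hone : 1 ≤ ((d : ℝ) + 1) / ((d : ℝ) - 1) * d * tail := calc
    1 = ((d : ℝ) + 1) / ((d : ℝ) - 1) * q := hinv.symm
    _ ≤ ((d : ℝ) + 1) / ((d : ℝ) - 1) * (d * tail) :=
      mul_le_mul_of_nonneg_left hsources (div_nonneg (by linarith) (by linarith))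
    _ = _ := by ring
  linarith
end

section
/- Let d ≥ 3 be odd and let H be the complete bipartite graph K_{d,d} with one edge {a,b} removed, possibly with a and b each attached to one additional outside vertex (so all degrees in the dynamics graph are d). Under synchronous majority dynamics, regardless of initial opinions on H and arbitrary opinions of the outside neighbors at every time: at time t = 2 all vertices on the side A containing a hold the value m_A (the majority of side A's initial opinions) and all vertices on side B hold m_B, and thereafter the opinions restricted to H have period at most two. -/
/-!
Every vertex of `H` other than `a` and `b` sees the whole opposite side, so at time 1 all of
side `A` except `a` holds `m_B` and all of side `B` except `b` holds `m_A`. From then on each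
vertex sees at least `d - 1 ≥ 2` agreeing neighbours against at most one dissenting voice (`a`,
`b` or an outside neighbour), so it copies that common value: at time 2 side `A` is uniformly
`m_A` and side `B` uniformly `m_B`, and afterwards the two uniform sides simply swap values at
every step.
-/

open Finset

section Majority

variable {ι : Type*} [Fintype ι] [DecidableEq ι]

lemma ite_pos_eq_one_or_neg_one (s : ℤ) :
    (if 0 < s then (1 : ℤ) else -1) = 1 ∨ (if 0 < s then (1 : ℤ) else -1) = -1 := by
  split_ifs <;> simp

lemma ite_pos_sum_erase_add_eq (hcard : 3 ≤ Fintype.card ι) {v : ι → ℤ} {i₀ : ι} {q ε : ℤ}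
    (hq : q = 1 ∨ q = -1) (hv : ∀ i ≠ i₀, v i = q) (hε : |ε| ≤ 1) :
    (if 0 < ∑ i ∈ univ.erase i₀, v i + ε then (1 : ℤ) else -1) = q := by
  have hsum : ∑ i ∈ univ.erase i₀, v i = ((Fintype.card ι : ℤ) - 1) * q := by
    rw [sum_congr rfl fun i hi => hv i (ne_of_mem_erase hi), sum_const,
      card_erase_of_mem (mem_univ _), card_univ, nsmul_eq_mul, Nat.cast_sub (by omega)]
    simp
  have hcard' : (3 : ℤ) ≤ Fintype.card ι := by exact_mod_cast hcard
  rw [hsum]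
  obtain ⟨hε₁, hε₂⟩ := abs_le.mp hε
  rcases hq with rfl | rfl
  · exact if_pos (by linarith)
  · exact if_neg (by linarith)

lemma ite_pos_sum_eq (hcard : 3 ≤ Fintype.card ι) {v : ι → ℤ} {i₀ : ι} {q : ℤ}
    (hq : q = 1 ∨ q = -1) (hv : ∀ i ≠ i₀, v i = q) (hv₀ : |v i₀| ≤ 1) :
    (if 0 < ∑ i, v i then (1 : ℤ) else -1) = q := by
  rw [← add_sum_erase _ _ (mem_univ i₀), add_comm]
  exact ite_pos_sum_erase_add_eq hcard hq hv hv₀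

/-- `new` and `old` are the two sides of `K_{d,d}` minus the edge `{i₀, j₀}`, and `z` is the
opinion of the outside neighbour of `i₀`. -/
lemma majority_step_eq (hcard : 3 ≤ Fintype.card ι) {new old : ι → ℤ} {i₀ j₀ : ι} {q z : ℤ}
    (hq : q = 1 ∨ q = -1) (hold : ∀ j ≠ j₀, old j = q) (hold₀ : |old j₀| ≤ 1) (hz : |z| ≤ 1)
    (hnew : ∀ i ≠ i₀, new i = if 0 < ∑ j, old j then 1 else -1)
    (hnew₀ : new i₀ = if 0 < ∑ j ∈ univ.erase j₀, old j + z then 1 else -1) (i : ι) :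
    new i = q := by
  by_cases hi : i = i₀
  · rw [hi, hnew₀]
    exact ite_pos_sum_erase_add_eq hcard hq hold hz
  · rw [hnew i hi]
    exact ite_pos_sum_eq hcard hq hold hold₀

end Majority

/-- Side `A` is `Sum.inl`, side `B` is `Sum.inr`, with `a = Sum.inl ⟨0,_⟩` and
`b = Sum.inr ⟨0,_⟩`; `x t` and `y t` are the opinions of the outside neighbours of `a` and `b`. -/
theorem stmt_19 (d : ℕ) (hd : 3 ≤ d)
    (x y : ℕ → ℤ)
    (hx : ∀ t, x t = 1 ∨ x t = -1) (hy : ∀ t, y t = 1 ∨ y t = -1)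
    (A : ℕ → (Fin d ⊕ Fin d) → ℤ)
    -- a vertex of side A other than a sees all of side B
    (hdynA : ∀ t (i : Fin d), i ≠ ⟨0, by omega⟩ →
      A (t + 1) (Sum.inl i) =
        if 0 < ∑ j : Fin d, A t (Sum.inr j) then 1 else -1)
    -- a sees all of side B except b, plus its outside neighbor with opinion x t
    (hdyna : ∀ t, A (t + 1) (Sum.inl ⟨0, by omega⟩) =
      if 0 < (∑ j ∈ Finset.univ.erase ⟨0, by omega⟩, A t (Sum.inr j)) + x t
        then 1 else -1)
    (hdynB : ∀ t (j : Fin d), j ≠ ⟨0, by omega⟩ →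
      A (t + 1) (Sum.inr j) =
        if 0 < ∑ i : Fin d, A t (Sum.inl i) then 1 else -1)
    (hdynb : ∀ t, A (t + 1) (Sum.inr ⟨0, by omega⟩) =
      if 0 < (∑ i ∈ Finset.univ.erase ⟨0, by omega⟩, A t (Sum.inl i)) + y t
        then 1 else -1) :
    (∀ i : Fin d, A 2 (Sum.inl i) =
      if 0 < ∑ i' : Fin d, A 0 (Sum.inl i') then 1 else -1) ∧
    (∀ j : Fin d, A 2 (Sum.inr j) =
      if 0 < ∑ j' : Fin d, A 0 (Sum.inr j') then 1 else -1) ∧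
    (∀ t : ℕ, 2 ≤ t → ∀ u : Fin d ⊕ Fin d, A (t + 2) u = A t u) := by
  have hcard : 3 ≤ Fintype.card (Fin d) := by simpa using hd
  have habs : ∀ {z : ℤ}, z = 1 ∨ z = -1 → |z| ≤ 1 := by rintro z (rfl | rfl) <;> simp
  have stepA : ∀ t q, (q = 1 ∨ q = -1) → (∀ j ≠ ⟨0, by omega⟩, A t (Sum.inr j) = q) →
      |A t (Sum.inr ⟨0, by omega⟩)| ≤ 1 → ∀ i, A (t + 1) (Sum.inl i) = q :=
    fun t _ hq hB hb => majority_step_eq hcard hq hB hb (habs (hx t)) (hdynA t) (hdyna t)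
  have stepB : ∀ t q, (q = 1 ∨ q = -1) → (∀ i ≠ ⟨0, by omega⟩, A t (Sum.inl i) = q) →
      |A t (Sum.inl ⟨0, by omega⟩)| ≤ 1 → ∀ j, A (t + 1) (Sum.inr j) = q :=
    fun t _ hq hA ha => majority_step_eq hcard hq hA ha (habs (hy t)) (hdynB t) (hdynb t)
  have swap : ∀ t p q, (p = 1 ∨ p = -1) → (q = 1 ∨ q = -1) →
      (∀ i, A t (Sum.inl i) = p) → (∀ j, A t (Sum.inr j) = q) →
      (∀ i, A (t + 1) (Sum.inl i) = q) ∧ (∀ j, A (t + 1) (Sum.inr j) = p) :=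
    fun t p q hp hq hA hB =>
      ⟨stepA t q hq (fun j _ => hB j) (by rw [hB]; exact habs hq),
        stepB t p hp (fun i _ => hA i) (by rw [hA]; exact habs hp)⟩
  have h2A := stepA 1 _ (ite_pos_eq_one_or_neg_one _) (hdynB 0)
    (by rw [hdynb 0]; exact habs (ite_pos_eq_one_or_neg_one _))
  have h2B := stepB 1 _ (ite_pos_eq_one_or_neg_one _) (hdynA 0)
    (by rw [hdyna 0]; exact habs (ite_pos_eq_one_or_neg_one _))
  have uniform : ∀ n, ∃ p q, (p = 1 ∨ p = -1) ∧ (q = 1 ∨ q = -1) ∧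
      (∀ i, A (n + 2) (Sum.inl i) = p) ∧ (∀ j, A (n + 2) (Sum.inr j) = q) := by
    intro n
    induction n with
    | zero => exact ⟨_, _, ite_pos_eq_one_or_neg_one _, ite_pos_eq_one_or_neg_one _, h2A, h2B⟩
    | succ n ih =>
      obtain ⟨p, q, hp, hq, hA, hB⟩ := ih
      exact ⟨q, p, hq, hp, swap _ p q hp hq hA hB⟩
  refine ⟨h2A, h2B, fun t ht u => ?_⟩
  obtain ⟨n, rfl⟩ : ∃ n, t = n + 2 := ⟨t - 2, by omega⟩
  obtain ⟨p, q, hp, hq, hA, hB⟩ := uniform n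
  obtain ⟨hA₁, hB₁⟩ := swap _ p q hp hq hA hB
  obtain ⟨hA₂, hB₂⟩ := swap _ q p hq hp hA₁ hB₁
  cases u with
  | inl i => rw [hA₂, hA]
  | inr j => rw [hB₂, hB]
end
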